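/- If real-valued random variables d_1,...,d_N, d_{N+1} are exchangeable, then the probability that d_{N+1} is at most the ⌈(1-α)(N+1)⌉-th smallest value among d_1,...,d_N is at least 1-α, provided α ∈ (0,1) and ⌈(1-α)(N+1)⌉ ≤ N. -/

import Mathlib

/-!
Whatever the values `x : Fin (N + 1) → ℝ`, at least `k` indices `j` have fewer than `k`
coordinates strictly below `x j`: the first `k` in sorted order do. By exchangeability the events
"fewer than `k` scores below `d j`" all have the probability of the one for `j = N + 1`, so that
probability is at least `k / (N + 1) ≥ 1 - α`. For `j = N + 1` the event says that `d (N + 1)` is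
at most the `k`-th smallest calibration score.
-/

open MeasureTheory

/-- The `k`-th smallest value (0-indexed) among `d 0, …, d (N-1)`. -/
noncomputable def orderStat {N : ℕ} (d : Fin N → ℝ) (k : Fin N) : ℝ :=
  d (Tuple.sort d k)

open Finset

theorem Finset.card_filter_comp_equiv {ι κ : Type*} [Fintype ι] [Fintype κ] (e : ι ≃ κ)
    (p : κ → Prop) [DecidablePred p] : #{i | p (e i)} = #{j | p j} :=
  card_equiv e (by simp)

namespace Tuple

variable {n : ℕ} {α : Type*} [LinearOrder α]

theorem card_filter_lt_le_iff_le_apply_sort (f : Fin n → α) (j : Fin n) (a : α) :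
    #{i | f i < a} ≤ j ↔ a ≤ f (sort f j) := by
  have h := lt_card_lt_iff_apply_lt_of_monotone (j := j) (a := a) (monotone_sort f)
  rw [Function.comp_def, card_filter_comp_equiv (sort f) (f · < a)] at h
  simpa only [not_lt] using h.not

theorem le_card_filter_card_filter_lt_lt (f : Fin n → α) {k : ℕ} (hk : k ≤ n) :
    k ≤ #{j | #{i | f i < f j} < k} :=
  calc k = #{m : Fin n | (m : ℕ) < k} := by rw [Fin.card_filter_val_lt, min_eq_right hk]
    _ ≤ #{m | #{i | f i < f (sort f m)} < k} :=
      card_le_card <| monotone_filter_right _ fun m _ hm =>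
        ((card_filter_lt_le_iff_le_apply_sort f m _).2 le_rfl).trans_lt hm
    _ = #{j | #{i | f i < f j} < k} := card_filter_comp_equiv (sort f) (#{i | f i < f ·} < k)

end Tuple

theorem le_orderStat_castSucc_of_card_lt {N k : ℕ} (x : Fin (N + 1) → ℝ) (hkN : k ≤ N)
    (hx : #{i | x i < x (Fin.last N)} < k) :
    x (Fin.last N) ≤ orderStat (fun i : Fin N => x i.castSucc) ⟨k - 1, by omega⟩ := by
  refine (Tuple.card_filter_lt_le_iff_le_apply_sort (fun i : Fin N => x i.castSucc) _ _).1 ?_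
  have hcount : #{i : Fin N | x i.castSucc < x (Fin.last N)} ≤ #{i | x i < x (Fin.last N)} :=
    card_le_card_of_injOn Fin.castSucc (by simp [Set.MapsTo]) (Fin.castSucc_injective N).injOn
  change _ ≤ k - 1
  omega

theorem measurableSet_card_filter_lt_lt {ι α : Type*} [Fintype ι] [LinearOrder α]
    [TopologicalSpace α] [OrderClosedTopology α] [SecondCountableTopology α] [MeasurableSpace α]
    [OpensMeasurableSpace α] (j : ι) (k : ℕ) :
    MeasurableSet {x : ι → α | #{i | x i < x j} < k} := by
  simp_rw [card_filter]
  refine measurableSet_lt (measurable_sum _ fun i _ => ?_) measurable_const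
  exact Measurable.ite (measurableSet_lt (measurable_pi_apply i) (measurable_pi_apply j))
    measurable_const measurable_const

theorem MeasureTheory.nat_mul_measure_univ_le_sum_measure {ι Ω : Type*} [Fintype ι]
    [MeasurableSpace Ω] (μ : Measure Ω) {A : ι → Set Ω} [∀ j, DecidablePred (· ∈ A j)]
    (hA : ∀ j, MeasurableSet (A j)) {k : ℕ} (hk : ∀ ω, k ≤ #{j | ω ∈ A j}) :
    k * μ Set.univ ≤ ∑ j, μ (A j) :=
  calc k * μ Set.univ = ∫⁻ _, (k : ENNReal) ∂μ := (lintegral_const _).symm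
    _ ≤ ∫⁻ ω, ∑ j, (A j).indicator (fun _ => 1) ω ∂μ := lintegral_mono fun ω => by
      simpa [Set.indicator_apply] using hk ω
    _ = ∑ j, μ (A j) := by
      rw [lintegral_finsetSum _ fun j _ => measurable_const.indicator (hA j)]
      simp only [lintegral_indicator_const (hA _), one_mul]

theorem ENNReal.ofReal_le_natCeil_mul_div (r : ℝ) {n : ℕ} (hn : 0 < n) :
    ENNReal.ofReal r ≤ ⌈r * n⌉₊ / n := by
  have h : r ≤ ⌈r * n⌉₊ / (n : ℝ) := by
    rw [le_div_iff₀ (by positivity)]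
    exact Nat.le_ceil _
  simpa [ENNReal.ofReal_div_of_pos (Nat.cast_pos.2 hn)] using ENNReal.ofReal_le_ofReal h

section Exchangeable

variable {ι Ω β : Type*} [MeasurableSpace Ω] [MeasurableSpace β] {μ : Measure Ω}
  {X : Ω → ι → β}

theorem measure_preimage_perm_eq_of_exchangeable (hX : Measurable X)
    (hexch : ∀ π : Equiv.Perm ι, μ.map (fun ω i => X ω (π i)) = μ.map X)
    (π : Equiv.Perm ι) {S : Set (ι → β)} (hS : MeasurableSet S) :
    μ ((fun ω i => X ω (π i)) ⁻¹' S) = μ (X ⁻¹' S) := by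
  have hXπ : Measurable fun ω i => X ω (π i) := by fun_prop
  simpa [Measure.map_apply hXπ hS, Measure.map_apply hX hS] using congrArg (· S) (hexch π)

theorem measure_card_filter_lt_lt_eq_of_exchangeable [Fintype ι] [DecidableEq ι] [LinearOrder β]
    [TopologicalSpace β] [OrderClosedTopology β] [SecondCountableTopology β]
    [OpensMeasurableSpace β] (hX : Measurable X)
    (hexch : ∀ π : Equiv.Perm ι, μ.map (fun ω i => X ω (π i)) = μ.map X)
    (j j' : ι) (k : ℕ) :
    μ {ω | #{i | X ω i < X ω j} < k} = μ {ω | #{i | X ω i < X ω j'} < k} := by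
  have h := measure_preimage_perm_eq_of_exchangeable hX hexch (Equiv.swap j' j)
    (measurableSet_card_filter_lt_lt j' k)
  simpa only [Set.preimage_ofPred_eq, Equiv.swap_apply_left,
    fun ω => card_filter_comp_equiv (Equiv.swap j' j) (X ω · < X ω j)] using h

end Exchangeable

/-- split conformal calibration lemma. If `d_1, …, d_{N+1}` are exchangeable,
then the probability that `d_{N+1}` is at most the `⌈(1-α)(N+1)⌉`-th smallest value among
`d_1, …, d_N` is at least `1 - α`. -/
theorem conformal_calibration_coverage
    {Ω : Type*} [MeasurableSpace Ω] (ℙ : Measure Ω) [IsProbabilityMeasure ℙ]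
    {N : ℕ} (hN : 0 < N)
    (d : Fin (N + 1) → Ω → ℝ) (hd : ∀ i, Measurable (d i))
    (hexch : ∀ π : Equiv.Perm (Fin (N + 1)),
      Measure.map (fun ω => fun i => d (π i) ω) ℙ =
      Measure.map (fun ω => fun i => d i ω) ℙ)
    (α : ℝ)
    (k : ℕ) (hk : k = ⌈(1 - α) * (N + 1)⌉₊) (hkN : k ≤ N) :
    ℙ {ω | d (Fin.last N) ω ≤
        orderStat (fun i : Fin N => d i.castSucc ω) ⟨k - 1, by omega⟩} ≥
      ENNReal.ofReal (1 - α) := by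
  set X : Ω → Fin (N + 1) → ℝ := fun ω i => d i ω
  have hX : Measurable X := measurable_pi_lambda _ hd
  let A (j : Fin (N + 1)) : Set Ω := {ω | #{i | X ω i < X ω j} < k}
  have hA (j : Fin (N + 1)) : MeasurableSet (A j) := hX (measurableSet_card_filter_lt_lt j k)
  have hsum : (k : ENNReal) ≤ (N + 1) * ℙ (A (Fin.last N)) :=
    calc (k : ENNReal) = k * ℙ Set.univ := by simp
      _ ≤ ∑ j, ℙ (A j) := nat_mul_measure_univ_le_sum_measure ℙ hA fun ω =>
        Tuple.le_card_filter_card_filter_lt_lt (X ω) (by omega)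
      _ = (N + 1) * ℙ (A (Fin.last N)) := by
        simp [A, measure_card_filter_lt_lt_eq_of_exchangeable hX hexch _ (Fin.last N)]
  calc ENNReal.ofReal (1 - α) ≤ k / (N + 1) := by
        simpa [hk] using ENNReal.ofReal_le_natCeil_mul_div (1 - α) N.succ_pos
    _ ≤ ℙ (A (Fin.last N)) := ENNReal.div_le_of_le_mul' hsum
    _ ≤ _ := measure_mono fun ω hω => le_orderStat_castSucc_of_card_lt (X ω) hkN hω
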